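/- Let λ > 0 and let b_n > 0 solve √(π/2) b_n exp(b_n²/2) = n with a_n = 1/b_n. Then there exists a constant C > 0 such that for all n ≥ 9, sup_{x∈ℝ} |F_λ^n(a_n x + b_n) - exp(-e^{-x})| > C / log n. -/

import Mathlib

open Real MeasureTheory Filter

noncomputable def stdPhi (x : ℝ) : ℝ := (Real.sqrt (2 * Real.pi))⁻¹ * Real.exp (-x ^ 2 / 2)

noncomputable def stdCdf (x : ℝ) : ℝ := ∫ t in Set.Iic x, stdPhi t

noncomputable def snCdf (l x : ℝ) : ℝ := ∫ t in Set.Iic x, 2 * stdPhi t * stdCdf (l * t)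

open Set Topology ProbabilityTheory

/-!
The tail of `SN(λ)` is at most twice the Gaussian tail, because `Φ(λt) ≤ 1`. Combined with the
Mills-ratio bound `1 - Φ(y) ≤ φ(y) (y² + 2) / (y³ + 3y)` and the defining equation of `b_n`, which
reads `n φ(b_n) = b_n / 2`, this gives `n (1 - F_λ(b_n)) ≤ 1 - 1 / (b_n² + 3)`. Hence `F_λⁿ(b_n)`
exceeds `Λ(0) = e⁻¹` by a multiple of `1 / b_n² ≥ 1 / (2 log n)`. That step needs `n` large compared
with `b_n²`, which holds once `b_n ≥ 4`; for the remaining bounded `b_n`, at `x = 2 b_n` the tail of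
`F_λ` is so small that `F_λⁿ` exceeds `Λ(2 b_n)` by an absolute constant.
-/

lemma stdPhi_eq_gaussianPDFReal : stdPhi = gaussianPDFReal 0 1 := by
  ext x
  simp [stdPhi, gaussianPDFReal]

lemma stdPhi_pos (x : ℝ) : 0 < stdPhi x := by
  rw [stdPhi_eq_gaussianPDFReal]
  exact gaussianPDFReal_pos _ _ _ one_ne_zero

lemma integrable_stdPhi : Integrable stdPhi := by
  rw [stdPhi_eq_gaussianPDFReal]
  exact integrable_gaussianPDFReal _ _

lemma integral_stdPhi : ∫ x, stdPhi x = 1 := by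
  rw [stdPhi_eq_gaussianPDFReal]
  exact integral_gaussianPDFReal_eq_one _ one_ne_zero

lemma continuous_stdPhi : Continuous stdPhi := by
  unfold stdPhi
  fun_prop

lemma stdPhi_neg (x : ℝ) : stdPhi (-x) = stdPhi x := by
  simp [stdPhi]

lemma hasDerivAt_stdPhi (t : ℝ) : HasDerivAt stdPhi (-t * stdPhi t) t := by
  have h : HasDerivAt (fun x : ℝ => -x ^ 2 / 2) (-t) t :=
    ((hasDerivAt_pow 2 t).neg.div_const 2).congr_deriv (by simp; ring)
  exact (h.exp.const_mul _).congr_deriv (by simp only [stdPhi]; ring)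

lemma tendsto_stdPhi_atTop : Tendsto stdPhi atTop (𝓝 0) := by
  have h : Tendsto (fun t : ℝ => -t ^ 2 / 2) atTop atBot :=
    (tendsto_neg_atTop_atBot.comp (tendsto_pow_atTop two_ne_zero)).atBot_div_const two_pos
  have h' := (tendsto_exp_atBot.comp h).const_mul (√(2 * π))⁻¹
  rw [mul_zero] at h'
  exact h'

lemma stdCdf_nonneg (x : ℝ) : 0 ≤ stdCdf x :=
  integral_nonneg fun t => (stdPhi_pos t).le

lemma stdCdf_le_one (x : ℝ) : stdCdf x ≤ 1 :=
  integral_stdPhi ▸ setIntegral_le_integral integrable_stdPhi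
    (Eventually.of_forall fun t => (stdPhi_pos t).le)

lemma monotone_stdCdf : Monotone stdCdf := fun _ _ hxy =>
  setIntegral_mono_set integrable_stdPhi.integrableOn
    (Eventually.of_forall fun t => (stdPhi_pos t).le) (Iic_subset_Iic.2 hxy).eventuallyLE

lemma stdCdf_add_integral_Ioi (x : ℝ) : stdCdf x + ∫ t in Ioi x, stdPhi t = 1 := by
  rw [stdCdf, intervalIntegral.integral_Iic_add_Ioi integrable_stdPhi.integrableOn
    integrable_stdPhi.integrableOn, integral_stdPhi]

lemma stdCdf_neg (x : ℝ) : stdCdf (-x) = 1 - stdCdf x := by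
  have h : stdCdf (-x) = ∫ t in Ioi x, stdPhi t := calc
    stdCdf (-x) = ∫ t in Iic (-x), stdPhi (-t) := by simp only [stdPhi_neg]; rfl
    _ = ∫ t in Ioi x, stdPhi t := by rw [integral_comp_neg_Iic, neg_neg]
  linarith [stdCdf_add_integral_Ioi x]

lemma hasDerivAt_stdPhi_mul_millsRatioBound {t : ℝ} (ht : 0 < t) :
    HasDerivAt (fun s => stdPhi s * ((s ^ 2 + 2) / (s ^ 3 + 3 * s)))
      (-(stdPhi t * (1 + 6 / (t ^ 2 * (t ^ 2 + 3) ^ 2)))) t := by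
  have hden : t ^ 3 + 3 * t ≠ 0 := by positivity
  have hq : HasDerivAt (fun s : ℝ => (s ^ 2 + 2) / (s ^ 3 + 3 * s))
      (((2 * t) * (t ^ 3 + 3 * t) - (t ^ 2 + 2) * (3 * t ^ 2 + 3)) / (t ^ 3 + 3 * t) ^ 2) t := by
    refine HasDerivAt.div ?_ ?_ hden
    · simpa using (hasDerivAt_pow 2 t).add_const 2
    · exact ((hasDerivAt_pow 3 t).add ((hasDerivAt_id t).const_mul 3)).congr_deriv (by simp)
  refine ((hasDerivAt_stdPhi t).mul hq).congr_deriv ?_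
  field_simp
  ring

/-- `(y² + 2) / (y³ + 3y)` is the third convergent of the continued fraction of the Mills ratio
`(1 - Φ(y)) / φ(y)`; it is an upper bound because `φ` times it has derivative
`-φ (1 + 6 / (t² (t² + 3)²)) ≤ -φ`. -/
lemma integral_Ioi_stdPhi_le {y : ℝ} (hy : 0 < y) :
    ∫ t in Ioi y, stdPhi t ≤ stdPhi y * ((y ^ 2 + 2) / (y ^ 3 + 3 * y)) := by
  set g : ℝ → ℝ := fun s => stdPhi s * ((s ^ 2 + 2) / (s ^ 3 + 3 * s))
  set g' : ℝ → ℝ := fun s => -(stdPhi s * (1 + 6 / (s ^ 2 * (s ^ 2 + 3) ^ 2)))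
  have hderiv : ∀ t ∈ Ioi y, HasDerivAt g (g' t) t := fun t ht =>
    hasDerivAt_stdPhi_mul_millsRatioBound (hy.trans ht)
  have hle : ∀ t ∈ Ioi y, stdPhi t ≤ -g' t := fun t _ => by
    have := stdPhi_pos t
    simp only [g', neg_neg]
    nlinarith [show 0 ≤ 6 / (t ^ 2 * (t ^ 2 + 3) ^ 2) by positivity]
  have hg'_nonpos : ∀ t ∈ Ioi y, g' t ≤ 0 := fun t ht =>
    neg_nonneg.1 ((stdPhi_pos t).le.trans (hle t ht))
  have hlim : Tendsto g atTop (𝓝 0) := by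
    refine tendsto_of_tendsto_of_tendsto_of_le_of_le' tendsto_const_nhds tendsto_stdPhi_atTop
      ?_ ?_
    · filter_upwards [eventually_gt_atTop 0] with t ht
      have := stdPhi_pos t
      positivity
    · filter_upwards [eventually_ge_atTop 1] with t ht
      have hfrac : (t ^ 2 + 2) / (t ^ 3 + 3 * t) ≤ 1 := by
        rw [div_le_one (by positivity)]
        nlinarith
      exact mul_le_of_le_one_right (stdPhi_pos t).le hfrac
  have hcont : ContinuousWithinAt g (Ici y) y :=
    (hasDerivAt_stdPhi_mul_millsRatioBound hy).continuousAt.continuousWithinAt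
  calc ∫ t in Ioi y, stdPhi t ≤ ∫ t in Ioi y, -g' t :=
        setIntegral_mono_on integrable_stdPhi.integrableOn
          (integrableOn_Ioi_deriv_of_nonpos hcont hderiv hg'_nonpos hlim).neg measurableSet_Ioi hle
    _ = g y := by
        rw [integral_neg, integral_Ioi_of_hasDerivAt_of_nonpos hcont hderiv hg'_nonpos hlim]
        ring

noncomputable def snPdf (l t : ℝ) : ℝ := 2 * stdPhi t * stdCdf (l * t)

section SkewNormal

variable (l : ℝ)

lemma snPdf_nonneg (t : ℝ) : 0 ≤ snPdf l t :=
  mul_nonneg (mul_nonneg zero_le_two (stdPhi_pos t).le) (stdCdf_nonneg _)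

lemma snPdf_le (t : ℝ) : snPdf l t ≤ 2 * stdPhi t :=
  mul_le_of_le_one_right (mul_nonneg zero_le_two (stdPhi_pos t).le) (stdCdf_le_one _)

lemma snPdf_add_snPdf_neg (t : ℝ) : snPdf l t + snPdf l (-t) = 2 * stdPhi t := by
  rw [snPdf, snPdf, stdPhi_neg, mul_neg, stdCdf_neg]
  ring

lemma integrable_snPdf : Integrable (snPdf l) := by
  refine (integrable_stdPhi.const_mul 2).mono ?_ (Eventually.of_forall fun t => ?_)
  · exact (((continuous_stdPhi.const_mul 2).measurable).mul
      (monotone_stdCdf.measurable.comp (measurable_const_mul l))).aestronglyMeasurable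
  · rw [Real.norm_of_nonneg (snPdf_nonneg l t), Real.norm_of_nonneg (by positivity [stdPhi_pos t])]
    exact snPdf_le l t

lemma integral_snPdf : ∫ t, snPdf l t = 1 := by
  have h : (∫ t, snPdf l t) + ∫ t, snPdf l (-t) = 2 := by
    rw [← integral_add (integrable_snPdf l) (integrable_snPdf l).comp_neg]
    simp_rw [snPdf_add_snPdf_neg]
    rw [integral_const_mul, integral_stdPhi, mul_one]
  rw [integral_neg_eq_self (snPdf l)] at h
  linarith

lemma snCdf_eq_integral_snPdf (x : ℝ) : snCdf l x = ∫ t in Iic x, snPdf l t := rfl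

lemma snCdf_nonneg (x : ℝ) : 0 ≤ snCdf l x :=
  integral_nonneg (snPdf_nonneg l)

lemma snCdf_le_one (x : ℝ) : snCdf l x ≤ 1 :=
  integral_snPdf l ▸ setIntegral_le_integral (integrable_snPdf l)
    (Eventually.of_forall (snPdf_nonneg l))

lemma one_sub_snCdf_le (y : ℝ) : 1 - snCdf l y ≤ 2 * ∫ t in Ioi y, stdPhi t := by
  have hsplit := intervalIntegral.integral_Iic_add_Ioi (b := y)
    (integrable_snPdf l).integrableOn (integrable_snPdf l).integrableOn
  rw [integral_snPdf, ← snCdf_eq_integral_snPdf] at hsplit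
  rw [← integral_const_mul]
  have := setIntegral_mono_on (s := Ioi y) (integrable_snPdf l).integrableOn
    (integrable_stdPhi.const_mul 2).integrableOn measurableSet_Ioi fun t _ => snPdf_le l t
  linarith

end SkewNormal

section Norming

variable {N b : ℝ}

lemma mul_stdPhi_eq_of_norming (hb : √(π / 2) * b * exp (b ^ 2 / 2) = N) (y : ℝ) :
    N * stdPhi y = b / 2 * exp ((b ^ 2 - y ^ 2) / 2) := by
  have hsqrt : √(2 * π) = 2 * √(π / 2) := by
    rw [show 2 * π = 2 ^ 2 * (π / 2) by ring, sqrt_mul (by positivity), sqrt_sq zero_le_two]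
  have hpos : 0 < √(π / 2) := sqrt_pos.2 (by positivity)
  rw [← hb, stdPhi, hsqrt, sub_div, exp_sub, neg_div, exp_neg]
  field_simp

lemma mul_exp_le_of_norming (hb0 : 0 ≤ b) (hb : √(π / 2) * b * exp (b ^ 2 / 2) = N) :
    b * exp (b ^ 2 / 2) ≤ N := by
  have h1 : 1 ≤ √(π / 2) := one_le_sqrt.2 (by linarith [pi_gt_three])
  rw [← hb]
  exact le_mul_of_one_le_left (by positivity) h1 |>.trans_eq (mul_assoc _ _ _).symm

lemma mul_one_sub_snCdf_le_of_norming (l : ℝ) (hb0 : 0 < b)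
    (hb : √(π / 2) * b * exp (b ^ 2 / 2) = N) {y : ℝ} (hy : 0 < y) :
    N * (1 - snCdf l y) ≤ b * exp ((b ^ 2 - y ^ 2) / 2) * ((y ^ 2 + 2) / (y ^ 3 + 3 * y)) := by
  have hN : 0 ≤ N := hb ▸ by positivity
  calc N * (1 - snCdf l y) ≤ N * (2 * ∫ t in Ioi y, stdPhi t) :=
        mul_le_mul_of_nonneg_left (one_sub_snCdf_le l y) hN
    _ ≤ N * (2 * (stdPhi y * ((y ^ 2 + 2) / (y ^ 3 + 3 * y)))) := by
        gcongr
        exact integral_Ioi_stdPhi_le hy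
    _ = _ := by
        rw [← mul_assoc 2, mul_comm 2, mul_assoc (stdPhi y), ← mul_assoc N,
          mul_stdPhi_eq_of_norming hb]
        ring

lemma mul_one_sub_snCdf_self_le_of_norming (l : ℝ) (hb0 : 0 < b)
    (hb : √(π / 2) * b * exp (b ^ 2 / 2) = N) :
    N * (1 - snCdf l b) ≤ 1 - 1 / (b ^ 2 + 3) := by
  refine (mul_one_sub_snCdf_le_of_norming l hb0 hb hb0).trans_eq ?_
  rw [sub_self, zero_div, exp_zero]
  field_simp
  ring

lemma mul_one_sub_snCdf_add_two_le_of_norming (l : ℝ) (hb0 : 0 < b)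
    (hb : √(π / 2) * b * exp (b ^ 2 / 2) = N) :
    N * (1 - snCdf l (b + 2)) ≤ exp (-(2 * b)) / 4 := by
  have hy : 0 < b + 2 := by linarith
  refine (mul_one_sub_snCdf_le_of_norming l hb0 hb hy).trans ?_
  have hexp : exp ((b ^ 2 - (b + 2) ^ 2) / 2) = exp (-2) * exp (-(2 * b)) := by
    rw [← exp_add]; ring_nf
  have he2 : exp (-2) ≤ 1 / 4 := by
    rw [exp_neg, inv_le_comm₀ (exp_pos 2) (by norm_num)]
    linarith [quadratic_le_exp_of_nonneg zero_le_two]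
  have hfrac : b * (((b + 2) ^ 2 + 2) / ((b + 2) ^ 3 + 3 * (b + 2))) ≤ 1 := by
    rw [← mul_div_assoc, div_le_one (by positivity)]
    nlinarith
  calc b * exp ((b ^ 2 - (b + 2) ^ 2) / 2) * (((b + 2) ^ 2 + 2) / ((b + 2) ^ 3 + 3 * (b + 2)))
      = exp (-2) * exp (-(2 * b)) * (b * (((b + 2) ^ 2 + 2) / ((b + 2) ^ 3 + 3 * (b + 2)))) := by
        rw [hexp]; ring
    _ ≤ 1 / 4 * exp (-(2 * b)) * 1 := by gcongr
    _ = exp (-(2 * b)) / 4 := by ring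

end Norming

lemma exp_neg_le_one_sub_pow {w : ℝ} (hw : w ≤ 1 / 2) (n : ℕ) :
    exp (-(n * (w + 2 * w ^ 2))) ≤ (1 - w) ^ n := by
  have hpos : 0 < 1 - w := by linarith
  have hlog : -(w + 2 * w ^ 2) ≤ log (1 - w) := by
    refine le_trans ?_ (one_sub_inv_le_log_of_pos hpos)
    rw [neg_le_sub_iff_le_add, inv_le_iff_one_le_mul₀ hpos]
    nlinarith
  rw [← mul_neg, exp_nat_mul]
  exact pow_le_pow_left₀ (exp_pos _).le ((exp_le_exp.2 hlog).trans_eq (exp_log hpos)) n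

lemma exp_neg_le_one_sub_div_two {u : ℝ} (hu0 : 0 ≤ u) (hu1 : u ≤ 1) : exp (-u) ≤ 1 - u / 2 := by
  rw [exp_neg, inv_le_iff_one_le_mul₀ (exp_pos u)]
  nlinarith [add_one_le_exp u]

lemma exp_neg_one_mul_le_pow_sub {n : ℕ} {F δ : ℝ} (hF : F ≤ 1) (hδ : 0 < δ)
    (htail : n * (1 - F) ≤ 1 - δ) (hn : 4 / δ ≤ n) :
    exp (-1) * (δ / 2) ≤ F ^ n - exp (-1) := by
  set w := 1 - F with hw
  have hw0 : 0 ≤ w := by linarith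
  have hnw : n * w ≤ 1 := htail.trans (by linarith)
  have hwδ : w ≤ δ / 4 := by
    have := mul_le_mul_of_nonneg_left hn hw0
    rw [mul_div_assoc', div_le_iff₀ hδ] at this
    nlinarith
  have hexpo : -1 + δ / 2 ≤ -(n * (w + 2 * w ^ 2)) := by
    nlinarith [mul_le_mul_of_nonneg_right hnw hw0]
  have hδ1 : δ ≤ 1 := by nlinarith [mul_nonneg (Nat.cast_nonneg n) hw0]
  have hFw : F = 1 - w := by ring
  calc exp (-1) * (δ / 2) = exp (-1) * (δ / 2 + 1) - exp (-1) := by ring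
    _ ≤ exp (-1) * exp (δ / 2) - exp (-1) := by gcongr; exact add_one_le_exp _
    _ = exp (-1 + δ / 2) - exp (-1) := by rw [exp_add]
    _ ≤ F ^ n - exp (-1) := by
        rw [hFw]
        gcongr
        exact (exp_le_exp.2 hexpo).trans (exp_neg_le_one_sub_pow (by linarith) n)

lemma le_pow_sub_exp_neg {n : ℕ} {F u : ℝ} (hF : 0 ≤ F) (hu0 : 0 ≤ u) (hu1 : u ≤ 1)
    (htail : n * (1 - F) ≤ u / 4) :
    u / 4 ≤ F ^ n - exp (-u) := by
  have hbernoulli := one_add_mul_le_pow (show -2 ≤ -(1 - F) by linarith) n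
  rw [show 1 + -(1 - F) = F by ring] at hbernoulli
  linarith [exp_neg_le_one_sub_div_two hu0 hu1]

lemma two_le_log_of_nine_le {x : ℝ} (hx : 9 ≤ x) : 2 ≤ log x := by
  rw [le_log_iff_exp_le (by linarith), show (2 : ℝ) = 1 + 1 by norm_num, exp_add]
  nlinarith [exp_one_lt_d9, exp_pos 1]

lemma bddAbove_range_abs_snCdf_pow_sub (l : ℝ) (n : ℕ) (a c : ℝ) :
    BddAbove (range fun x => |snCdf l (a * x + c) ^ n - exp (-exp (-x))|) := by
  refine ⟨1, ?_⟩
  rintro _ ⟨x, rfl⟩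
  exact abs_sub_le_of_nonneg_of_le (pow_nonneg (snCdf_nonneg l _) n)
    (pow_le_one₀ (snCdf_nonneg l _) (snCdf_le_one l _)) (exp_pos _).le
    (exp_le_one_iff.2 (neg_nonpos.2 (exp_pos _).le))

section GumbelGap

variable (l : ℝ) {n : ℕ} {b : ℝ}

lemma exp_neg_one_div_le_snCdf_pow_sub (hb4 : 4 ≤ b)
    (hb : √(π / 2) * b * exp (b ^ 2 / 2) = n) :
    exp (-1) / (8 * log n) ≤ snCdf l b ^ n - exp (-1) := by
  have hb0 : 0 < b := by linarith
  have hbn := mul_exp_le_of_norming hb0.le hb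
  have hlarge : 4 * (b ^ 2 + 3) ≤ n := by
    have hquad := quadratic_le_exp_of_nonneg (x := b ^ 2 / 2) (by positivity)
    have hpoly : 4 * (b ^ 2 + 3) ≤ b * (1 + b ^ 2 / 2 + (b ^ 2 / 2) ^ 2 / 2) := by
      nlinarith [mul_le_mul_of_nonneg_right hb4
        (show 0 ≤ 1 + b ^ 2 / 2 + (b ^ 2 / 2) ^ 2 / 2 by positivity)]
    nlinarith [mul_le_mul_of_nonneg_left hquad hb0.le]
  have hlog : b ^ 2 ≤ 2 * log n := by
    have hexp : exp (b ^ 2 / 2) ≤ n :=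
      le_mul_of_one_le_left (exp_pos _).le (by linarith) |>.trans hbn
    linarith [(le_log_iff_exp_le ((exp_pos _).trans_le hexp)).2 hexp]
  have hlog2 := two_le_log_of_nine_le (show (9 : ℝ) ≤ n by nlinarith)
  have hδ : 1 / (8 * log n) ≤ 1 / (b ^ 2 + 3) / 2 := by
    rw [div_div, div_le_div_iff_of_pos_left one_pos (by positivity) (by positivity)]
    linarith
  calc exp (-1) / (8 * log n) = exp (-1) * (1 / (8 * log n)) := by ring
    _ ≤ exp (-1) * (1 / (b ^ 2 + 3) / 2) := mul_le_mul_of_nonneg_left hδ (exp_pos _).le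
    _ ≤ snCdf l b ^ n - exp (-1) :=
        exp_neg_one_mul_le_pow_sub (snCdf_le_one l b) (by positivity)
          (mul_one_sub_snCdf_self_le_of_norming l hb0 hb) (by rwa [div_div_eq_mul_div, div_one])

lemma exp_neg_eight_div_four_le_snCdf_pow_sub (hb0 : 0 < b) (hb4 : b < 4)
    (hb : √(π / 2) * b * exp (b ^ 2 / 2) = n) :
    exp (-8) / 4 ≤ snCdf l (b + 2) ^ n - exp (-exp (-(2 * b))) := by
  have hu8 : exp (-8) ≤ exp (-(2 * b)) := exp_le_exp.2 (by linarith)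
  have hu1 : exp (-(2 * b)) ≤ 1 := exp_le_one_iff.2 (by linarith)
  have hgap := le_pow_sub_exp_neg (snCdf_nonneg l (b + 2)) (exp_pos _).le hu1
    (mul_one_sub_snCdf_add_two_le_of_norming l hb0 hb)
  linarith

end GumbelGap

theorem stmt_10_general (l : ℝ) (b : ℕ → ℝ)
    (hb : ∀ n : ℕ, 1 ≤ n → 0 < b n ∧
      Real.sqrt (Real.pi / 2) * b n * Real.exp ((b n) ^ 2 / 2) = n) :
    ∃ C > 0, ∀ n : ℕ, 9 ≤ n →
      C / Real.log n <
        ⨆ x : ℝ, |(snCdf l ((b n)⁻¹ * x + b n)) ^ n - Real.exp (-Real.exp (-x))| := by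
  refine ⟨exp (-8) / 8, by positivity, fun n hn => ?_⟩
  obtain ⟨hb0, hbn⟩ := hb n (by omega)
  have hlog := two_le_log_of_nine_le (show (9 : ℝ) ≤ n by exact_mod_cast hn)
  have hbdd := bddAbove_range_abs_snCdf_pow_sub l n (b n)⁻¹ (b n)
  rcases lt_or_ge (b n) 4 with hb4 | hb4
  · refine lt_of_lt_of_le ?_ (le_ciSup hbdd (2 * b n))
    rw [mul_left_comm, inv_mul_cancel₀ hb0.ne', mul_one, add_comm]
    calc exp (-8) / 8 / log n ≤ exp (-8) / 8 / 2 := by gcongr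
      _ < exp (-8) / 4 := by linarith [exp_pos (-8)]
      _ ≤ _ := (exp_neg_eight_div_four_le_snCdf_pow_sub l hb0 hb4 hbn).trans (le_abs_self _)
  · refine lt_of_lt_of_le ?_ (le_ciSup hbdd 0)
    rw [mul_zero, zero_add, neg_zero, exp_zero]
    calc exp (-8) / 8 / log n < exp (-1) / (8 * log n) := by
          rw [div_div]
          gcongr
          norm_num
      _ ≤ _ := (exp_neg_one_div_le_snCdf_pow_sub l hb4 hbn).trans (le_abs_self _)

theorem stmt_10 (l : ℝ) (hl : 0 < l) (b : ℕ → ℝ)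
    (hb : ∀ n : ℕ, 1 ≤ n → 0 < b n ∧
      Real.sqrt (Real.pi / 2) * b n * Real.exp ((b n) ^ 2 / 2) = n) :
    ∃ C > 0, ∀ n : ℕ, 9 ≤ n →
      C / Real.log n <
        ⨆ x : ℝ, |(snCdf l ((b n)⁻¹ * x + b n)) ^ n - Real.exp (-Real.exp (-x))| :=
  stmt_10_general l b hb
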